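/- Let a, b ∈ ℝ with a ≥ b and let σ(y) = max(y, 0) be the ReLU function. Then the function h(ω) = σ(ω + a) − σ(ω + b) is monotone nondecreasing on ℝ, nonnegative, and satisfies 0 ≤ h(ω) ≤ a − b for all ω. Consequently, if q ∈ ℝᵐ has nonnegative partial sums (Σ_{j=1}^l q_j ≥ 0 for all l = 1,…,m) and b ∈ ℝᵐ is nonincreasing (b_l ≤ b_{l−1} for l = 2,…,m), then ω ↦ Σ_{j=1}^m q_j σ(ω + b_j) is monotone nondecreasing on ℝ. -/

import Mathlib

lemma relu_diff_mono (a b : ℝ) (hab : b ≤ a) :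
    Monotone (fun ω : ℝ => max (ω + a) 0 - max (ω + b) 0) := by
  intro x y hxy
  simp only [max_def]
  split_ifs <;> simp_all <;> linarith

lemma relu_diff_bounds (a b : ℝ) (hab : b ≤ a) (ω : ℝ) :
    0 ≤ max (ω + a) 0 - max (ω + b) 0 ∧ max (ω + a) 0 - max (ω + b) 0 ≤ a - b := by
  constructor <;> (simp only [max_def]; split_ifs <;> simp_all <;> linarith)

lemma abel_nonneg (n : ℕ) (q d : ℕ → ℝ)
    (hq : ∀ l, l < n → 0 ≤ ∑ j ∈ Finset.range (l + 1), q j)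
    (hd : ∀ i j, i ≤ j → j < n → d j ≤ d i)
    (hd0 : ∀ j, j < n → 0 ≤ d j) :
    0 ≤ ∑ j ∈ Finset.range n, q j * d j := by
  induction n generalizing d with
  | zero => simp
  | succ n ih =>
    have key : ∑ j ∈ Finset.range (n + 1), q j * d j
        = (∑ j ∈ Finset.range n, q j * (d j - d n))
          + (∑ j ∈ Finset.range (n + 1), q j) * d n := by
      simp [Finset.sum_range_succ, mul_sub, Finset.sum_sub_distrib, Finset.sum_mul, add_mul]
      ring
    rw [key]
    have h1 : 0 ≤ ∑ j ∈ Finset.range n, q j * (d j - d n) := by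
      refine ih (fun j => d j - d n) (fun l hl => hq l (Nat.lt_succ_of_lt hl)) (fun i j hij hj => ?_) (fun j hj => ?_)
      · have := hd i j hij (hj.trans (Nat.lt_succ_self n))
        linarith
      · have := hd j n (le_of_lt hj) (Nat.lt_succ_self n)
        linarith
    have h2 : 0 ≤ (∑ j ∈ Finset.range (n + 1), q j) * d n :=
      mul_nonneg (hq n (Nat.lt_succ_self n)) (hd0 n (Nat.lt_succ_self n))
    linarith

/-- Summation-by-parts lemma for the stacked-ReLU controller: for `a ≥ b`, the
function `h(ω) = σ(ω + a) − σ(ω + b)` is monotone nondecreasing and satisfies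
`0 ≤ h(ω) ≤ a − b`; consequently, if the partial sums of `q` are nonnegative and
`bv` is nonincreasing, then `ω ↦ Σ_j q_j σ(ω + bv_j)` is monotone nondecreasing. -/
theorem relu_difference_monotone
    (a b : ℝ) (hab : b ≤ a) :
    Monotone (fun ω : ℝ => max (ω + a) 0 - max (ω + b) 0) ∧
    (∀ ω : ℝ, 0 ≤ max (ω + a) 0 - max (ω + b) 0 ∧
      max (ω + a) 0 - max (ω + b) 0 ≤ a - b) ∧
    (∀ (m : ℕ) (q bv : Fin m → ℝ),
      (∀ l : Fin m, 0 ≤ ∑ j ∈ Finset.Iic l, q j) →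
      Antitone bv →
      Monotone (fun ω : ℝ => ∑ j, q j * max (ω + bv j) 0)) := by
  refine ⟨relu_diff_mono a b hab, fun ω => relu_diff_bounds a b hab ω, ?_⟩
  intro m q bv hq hbv x y hxy
  dsimp only
  rw [← sub_nonneg, ← Finset.sum_sub_distrib]
  simp_rw [← mul_sub]
  set Q : ℕ → ℝ := fun i => if h : i < m then q ⟨i, h⟩ else 0 with hQ
  set D : ℕ → ℝ := fun i =>
    if h : i < m then max (y + bv ⟨i, h⟩) 0 - max (x + bv ⟨i, h⟩) 0 else 0 with hD
  have hsum : ∑ j : Fin m, q j * (max (y + bv j) 0 - max (x + bv j) 0)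
      = ∑ i ∈ Finset.range m, Q i * D i := by
    rw [← Fin.sum_univ_eq_sum_range (fun i => Q i * D i) m]
    refine Finset.sum_congr rfl fun j _ => ?_
    simp [hQ, hD, j.isLt]
  rw [hsum]
  apply abel_nonneg
  · intro l hl
    have h1 : ∑ j ∈ Finset.range (l + 1), Q j
        = ∑ j ∈ Finset.Iic (⟨l, hl⟩ : Fin m), q j := by
      have h2 : (Finset.Iic (⟨l, hl⟩ : Fin m)).map Fin.valEmbedding
          = Finset.Iic l := Fin.map_valEmbedding_Iic _
      have h3 : Finset.range (l + 1) = Finset.Iic l := by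
        ext k; simp [Nat.lt_succ_iff]
      rw [h3, ← h2, Finset.sum_map]
      refine Finset.sum_congr rfl fun j _ => ?_
      simp [hQ, j.isLt]
    rw [h1]; exact hq _
  · intro i j hij hjm
    have him : i < m := lt_of_le_of_lt hij hjm
    have hb : bv ⟨j, hjm⟩ ≤ bv ⟨i, him⟩ := hbv (by exact hij)
    have := relu_diff_mono y x hxy hb
    simp only [hD, dif_pos hjm, dif_pos him]
    dsimp only at this
    rw [add_comm (bv ⟨j, hjm⟩) y, add_comm (bv ⟨j, hjm⟩) x,
      add_comm (bv ⟨i, him⟩) y, add_comm (bv ⟨i, him⟩) x] at this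
    exact this
  · intro j hj
    simp only [hD, dif_pos hj]
    have := (relu_diff_bounds y x hxy (bv ⟨j, hj⟩)).1
    rw [add_comm (bv ⟨j, hj⟩) y, add_comm (bv ⟨j, hj⟩) x] at this
    exact this
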